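/- arXiv:math/0605557 — 2 statements merged into one kernel-verified Lean document; each statement's English description precedes it below -/
import Mathlib

section
/- Let a > 0 and d ≥ 1. There exists a constant c depending only on a and d such that for any t > 0, any x, y ∈ ℝ^d, and any nonnegative measure ν on ℝ^d: ∫_0^t ∫_{ℝ^d} s^{-d/2} e^{-a|x-z|²/(2s)} (t-s)^{-d/2} e^{-a|z-y|²/(t-s)} ν(dz) ds ≤ c · t^{-d/2} e^{-a|x-y|²/(2t)} · sup_{u∈ℝ^d} ∫_0^t ∫_{ℝ^d} s^{-d/2} e^{-a|u-z|²/(4s)} ν(dz) ds. -/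
open MeasureTheory Metric Real Set ENNReal

lemma gcb_key {p q r α β : ℝ} (hα : 0 < α) (hβ : 0 < β) (hr : 0 ≤ r) (hp : 0 ≤ p) (hq : 0 ≤ q)
    (h : r ≤ p + q) : r ^ 2 / (α + β) ≤ p ^ 2 / α + q ^ 2 / β := by
  have hab : 0 < α + β := by linarith
  have h1 : r ^ 2 ≤ (p + q) ^ 2 := by nlinarith
  have h2 : (p + q) ^ 2 / (α + β) ≤ p ^ 2 / α + q ^ 2 / β := by
    rw [div_add_div _ _ (ne_of_gt hα) (ne_of_gt hβ), div_le_div_iff₀ hab (by positivity)]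
    nlinarith [sq_nonneg (β * p - α * q)]
  exact le_trans ((div_le_div_iff_of_pos_right hab).mpr h1) h2

lemma gcb_third {t : ℝ} (ht : 0 < t) (d : ℕ) :
    3 ^ ((d : ℝ) / 2) * t ^ (-(d : ℝ) / 2) = (t / 3) ^ (-(d : ℝ) / 2) := by
  have ht3 : (0:ℝ) < t / 3 := by linarith
  have h2' : (t / 3) ^ (-(d : ℝ) / 2) * 3 ^ (-(d : ℝ) / 2) = t ^ (-(d : ℝ) / 2) := by
    rw [← Real.mul_rpow ht3.le (by norm_num)]
    norm_num
  calc 3 ^ ((d : ℝ) / 2) * t ^ (-(d : ℝ) / 2)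
      = 3 ^ ((d : ℝ) / 2) * ((t / 3) ^ (-(d : ℝ) / 2) * 3 ^ (-(d : ℝ) / 2)) := by rw [h2']
    _ = (t / 3) ^ (-(d : ℝ) / 2) * (3 : ℝ) ^ (-(d : ℝ) / 2 + (d : ℝ) / 2) := by
        rw [Real.rpow_add (by norm_num : (0:ℝ) < 3)]; ring
    _ = (t / 3) ^ (-(d : ℝ) / 2) := by
        rw [show -(d : ℝ) / 2 + (d : ℝ) / 2 = 0 by ring, Real.rpow_zero, mul_one]

/-- Case `0 < s ≤ t/3`. -/
lemma gcb_case1 {a t s p q r : ℝ} (d : ℕ) (ha : 0 < a) (ht : 0 < t)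
    (hs : 0 < s) (hs3 : s ≤ t / 3) (hp : 0 ≤ p) (hq : 0 ≤ q) (hr : 0 ≤ r) (hpq : r ≤ p + q) :
    s ^ (-(d : ℝ) / 2) * Real.exp (-a * p ^ 2 / (2 * s)) * (t - s) ^ (-(d : ℝ) / 2) *
      Real.exp (-a * q ^ 2 / (t - s)) ≤
    3 ^ ((d : ℝ) / 2) * t ^ (-(d : ℝ) / 2) * Real.exp (-a * r ^ 2 / (2 * t)) *
      (s ^ (-(d : ℝ) / 2) * Real.exp (-a * p ^ 2 / (4 * s))) := by
  have hts : 0 < t - s := by linarith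
  have hneg : -(d : ℝ) / 2 ≤ 0 := by
    have : (0:ℝ) ≤ d := Nat.cast_nonneg d
    linarith
  have hA : (t - s) ^ (-(d : ℝ) / 2) ≤ 3 ^ ((d : ℝ) / 2) * t ^ (-(d : ℝ) / 2) := by
    rw [gcb_third ht d]
    exact Real.rpow_le_rpow_of_nonpos (by linarith) (by linarith) hneg
  have hB : Real.exp (-a * p ^ 2 / (2 * s)) =
      Real.exp (-a * p ^ 2 / (4 * s)) * Real.exp (-a * p ^ 2 / (4 * s)) := by
    rw [← Real.exp_add]
    congr 1
    field_simp
    ring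
  have hC : Real.exp (-a * p ^ 2 / (4 * s)) * Real.exp (-a * q ^ 2 / (t - s)) ≤
      Real.exp (-a * r ^ 2 / (2 * t)) := by
    rw [← Real.exp_add, Real.exp_le_exp]
    have hkey : r ^ 2 / (4 * s + (t - s)) ≤ p ^ 2 / (4 * s) + q ^ 2 / (t - s) :=
      gcb_key (by linarith) hts hr hp hq hpq
    have h2t : r ^ 2 / (2 * t) ≤ r ^ 2 / (4 * s + (t - s)) :=
      div_le_div_of_nonneg_left (by positivity) (by linarith) (by linarith)
    have hchain : r ^ 2 / (2 * t) ≤ p ^ 2 / (4 * s) + q ^ 2 / (t - s) := le_trans h2t hkey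
    have hmul := mul_le_mul_of_nonneg_left hchain ha.le
    have e1 : -a * p ^ 2 / (4 * s) = -(a * (p ^ 2 / (4 * s))) := by ring
    have e2 : -a * q ^ 2 / (t - s) = -(a * (q ^ 2 / (t - s))) := by ring
    have e3 : -a * r ^ 2 / (2 * t) = -(a * (r ^ 2 / (2 * t))) := by ring
    rw [e1, e2, e3]
    have : a * (p ^ 2 / (4 * s)) + a * (q ^ 2 / (t - s)) =
        a * (p ^ 2 / (4 * s) + q ^ 2 / (t - s)) := by ring
    linarith [hmul]
  have hsz : (0:ℝ) ≤ s ^ (-(d : ℝ) / 2) := Real.rpow_nonneg hs.le _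
  have htz : (0:ℝ) ≤ 3 ^ ((d : ℝ) / 2) * t ^ (-(d : ℝ) / 2) :=
    mul_nonneg (Real.rpow_nonneg (by norm_num) _) (Real.rpow_nonneg ht.le _)
  calc s ^ (-(d : ℝ) / 2) * Real.exp (-a * p ^ 2 / (2 * s)) * (t - s) ^ (-(d : ℝ) / 2) *
      Real.exp (-a * q ^ 2 / (t - s))
      = (s ^ (-(d : ℝ) / 2) * Real.exp (-a * p ^ 2 / (4 * s))) *
        ((t - s) ^ (-(d : ℝ) / 2) *
          (Real.exp (-a * p ^ 2 / (4 * s)) * Real.exp (-a * q ^ 2 / (t - s)))) := by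
        rw [hB]; ring
    _ ≤ (s ^ (-(d : ℝ) / 2) * Real.exp (-a * p ^ 2 / (4 * s))) *
        ((3 ^ ((d : ℝ) / 2) * t ^ (-(d : ℝ) / 2)) * Real.exp (-a * r ^ 2 / (2 * t))) := by
        refine mul_le_mul_of_nonneg_left ?_ (mul_nonneg hsz (Real.exp_nonneg _))
        exact mul_le_mul hA hC (by positivity) htz
    _ = 3 ^ ((d : ℝ) / 2) * t ^ (-(d : ℝ) / 2) * Real.exp (-a * r ^ 2 / (2 * t)) *
        (s ^ (-(d : ℝ) / 2) * Real.exp (-a * p ^ 2 / (4 * s))) := by ring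

/-- Case `t/3 < s < t`. -/
lemma gcb_case2 {a t s p q r : ℝ} (d : ℕ) (ha : 0 < a) (ht : 0 < t)
    (hs3 : t / 3 < s) (hst : s < t) (hp : 0 ≤ p) (hq : 0 ≤ q) (hr : 0 ≤ r) (hpq : r ≤ p + q) :
    s ^ (-(d : ℝ) / 2) * Real.exp (-a * p ^ 2 / (2 * s)) * (t - s) ^ (-(d : ℝ) / 2) *
      Real.exp (-a * q ^ 2 / (t - s)) ≤
    3 ^ ((d : ℝ) / 2) * t ^ (-(d : ℝ) / 2) * Real.exp (-a * r ^ 2 / (2 * t)) *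
      ((t - s) ^ (-(d : ℝ) / 2) * Real.exp (-a * q ^ 2 / (4 * (t - s)))) := by
  have hts : 0 < t - s := by linarith
  have hs0 : 0 < s := by linarith
  have hneg : -(d : ℝ) / 2 ≤ 0 := by
    have : (0:ℝ) ≤ d := Nat.cast_nonneg d
    linarith
  have hA : s ^ (-(d : ℝ) / 2) ≤ 3 ^ ((d : ℝ) / 2) * t ^ (-(d : ℝ) / 2) := by
    rw [gcb_third ht d]
    exact Real.rpow_le_rpow_of_nonpos (by linarith) (by linarith) hneg
  have hB : Real.exp (-a * q ^ 2 / (t - s)) =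
      Real.exp (-a * q ^ 2 / (2 * (t - s))) * Real.exp (-a * q ^ 2 / (2 * (t - s))) := by
    rw [← Real.exp_add]
    congr 1
    field_simp
    ring
  have hC : Real.exp (-a * p ^ 2 / (2 * s)) * Real.exp (-a * q ^ 2 / (2 * (t - s))) ≤
      Real.exp (-a * r ^ 2 / (2 * t)) := by
    rw [← Real.exp_add, Real.exp_le_exp]
    have hkey : r ^ 2 / (2 * s + 2 * (t - s)) ≤ p ^ 2 / (2 * s) + q ^ 2 / (2 * (t - s)) :=
      gcb_key (by linarith) (by linarith) hr hp hq hpq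
    have heq : r ^ 2 / (2 * s + 2 * (t - s)) = r ^ 2 / (2 * t) := by
      congr 1
      ring
    have hchain : r ^ 2 / (2 * t) ≤ p ^ 2 / (2 * s) + q ^ 2 / (2 * (t - s)) := by
      rw [← heq]; exact hkey
    have hmul := mul_le_mul_of_nonneg_left hchain ha.le
    have e1 : -a * p ^ 2 / (2 * s) = -(a * (p ^ 2 / (2 * s))) := by ring
    have e2 : -a * q ^ 2 / (2 * (t - s)) = -(a * (q ^ 2 / (2 * (t - s)))) := by ring
    have e3 : -a * r ^ 2 / (2 * t) = -(a * (r ^ 2 / (2 * t))) := by ring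
    rw [e1, e2, e3]
    have : a * (p ^ 2 / (2 * s)) + a * (q ^ 2 / (2 * (t - s))) =
        a * (p ^ 2 / (2 * s) + q ^ 2 / (2 * (t - s))) := by ring
    linarith [hmul]
  have hD : Real.exp (-a * q ^ 2 / (2 * (t - s))) ≤ Real.exp (-a * q ^ 2 / (4 * (t - s))) := by
    rw [Real.exp_le_exp]
    have h4 : a * q ^ 2 / (4 * (t - s)) ≤ a * q ^ 2 / (2 * (t - s)) :=
      div_le_div_of_nonneg_left (by positivity) (by linarith) (by linarith)
    have e1 : -a * q ^ 2 / (2 * (t - s)) = -(a * q ^ 2 / (2 * (t - s))) := by ring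
    have e2 : -a * q ^ 2 / (4 * (t - s)) = -(a * q ^ 2 / (4 * (t - s))) := by ring
    rw [e1, e2]
    linarith
  have htz : (0:ℝ) ≤ 3 ^ ((d : ℝ) / 2) * t ^ (-(d : ℝ) / 2) :=
    mul_nonneg (Real.rpow_nonneg (by norm_num) _) (Real.rpow_nonneg ht.le _)
  have htsz : (0:ℝ) ≤ (t - s) ^ (-(d : ℝ) / 2) := Real.rpow_nonneg hts.le _
  calc s ^ (-(d : ℝ) / 2) * Real.exp (-a * p ^ 2 / (2 * s)) * (t - s) ^ (-(d : ℝ) / 2) *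
      Real.exp (-a * q ^ 2 / (t - s))
      = (t - s) ^ (-(d : ℝ) / 2) *
        ((s ^ (-(d : ℝ) / 2) * (Real.exp (-a * p ^ 2 / (2 * s)) *
          Real.exp (-a * q ^ 2 / (2 * (t - s))))) * Real.exp (-a * q ^ 2 / (2 * (t - s)))) := by
        rw [hB]; ring
    _ ≤ (t - s) ^ (-(d : ℝ) / 2) *
        ((3 ^ ((d : ℝ) / 2) * t ^ (-(d : ℝ) / 2) * Real.exp (-a * r ^ 2 / (2 * t))) *
          Real.exp (-a * q ^ 2 / (4 * (t - s)))) := by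
        refine mul_le_mul_of_nonneg_left ?_ htsz
        refine mul_le_mul ?_ hD (Real.exp_nonneg _) (mul_nonneg htz (Real.exp_nonneg _))
        exact mul_le_mul hA hC (by positivity) htz
    _ = 3 ^ ((d : ℝ) / 2) * t ^ (-(d : ℝ) / 2) * Real.exp (-a * r ^ 2 / (2 * t)) *
        ((t - s) ^ (-(d : ℝ) / 2) * Real.exp (-a * q ^ 2 / (4 * (t - s)))) := by ring

lemma gcb_cov (t c : ℝ) (H : ℝ → ℝ≥0∞) :
    (∫⁻ s in Ioc c t, H (t - s)) = ∫⁻ σ in Ico 0 (t - c), H σ := by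
  have hpre : Ioc c t = (MeasurableEquiv.subLeft t) ⁻¹' (Ico 0 (t - c)) := by
    ext s
    simp only [mem_preimage, mem_Ioc, mem_Ico]
    show c < s ∧ s ≤ t ↔ 0 ≤ t - s ∧ t - s < t - c
    constructor <;> rintro ⟨h1, h2⟩ <;> exact ⟨by linarith, by linarith⟩
  have hmap : Measure.map (⇑(MeasurableEquiv.subLeft t)) (volume : Measure ℝ) = volume :=
    (Measure.measurePreserving_sub_left volume t).map_eq
  calc (∫⁻ s in Ioc c t, H (t - s))
      = ∫⁻ s in (MeasurableEquiv.subLeft t) ⁻¹' (Ico 0 (t - c)),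
          H ((MeasurableEquiv.subLeft t) s) := by rw [← hpre]; rfl
    _ = ∫⁻ σ, H σ ∂(Measure.map (MeasurableEquiv.subLeft t)
          (volume.restrict ((MeasurableEquiv.subLeft t) ⁻¹' (Ico 0 (t - c))))) :=
        (lintegral_map_equiv H (MeasurableEquiv.subLeft t)).symm
    _ = ∫⁻ σ in Ico 0 (t - c), H σ := by
        rw [← Measure.restrict_map (MeasurableEquiv.subLeft t).measurable measurableSet_Ico, hmap]

theorem gaussian_convolution_bound
    (a : ℝ) (ha : 0 < a) (d : ℕ) (hd : 1 ≤ d) :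
    ∃ c : ℝ, 0 < c ∧
      ∀ (t : ℝ), 0 < t →
      ∀ (x y : EuclideanSpace ℝ (Fin d)),
      ∀ (ν : Measure (EuclideanSpace ℝ (Fin d))),
        (∫⁻ s in Ioc (0 : ℝ) t, ∫⁻ z,
            ENNReal.ofReal (s ^ (-(d : ℝ) / 2) * Real.exp (-a * dist x z ^ 2 / (2 * s)) *
              (t - s) ^ (-(d : ℝ) / 2) * Real.exp (-a * dist z y ^ 2 / (t - s))) ∂ν)
          ≤ ENNReal.ofReal (c * t ^ (-(d : ℝ) / 2) * Real.exp (-a * dist x y ^ 2 / (2 * t))) *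
            ⨆ u : EuclideanSpace ℝ (Fin d),
              ∫⁻ s in Ioc (0 : ℝ) t, ∫⁻ z,
                ENNReal.ofReal (s ^ (-(d : ℝ) / 2) *
                  Real.exp (-a * dist u z ^ 2 / (4 * s))) ∂ν := by
  refine ⟨2 * 3 ^ ((d : ℝ) / 2), by positivity, ?_⟩
  intro t ht x y ν
  set M : ℝ≥0∞ := ⨆ u : EuclideanSpace ℝ (Fin d),
      ∫⁻ s in Ioc (0 : ℝ) t, ∫⁻ z,
        ENNReal.ofReal (s ^ (-(d : ℝ) / 2) *
          Real.exp (-a * dist u z ^ 2 / (4 * s))) ∂ν with hM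
  have hKr0 : 0 ≤ 3 ^ ((d : ℝ) / 2) * t ^ (-(d : ℝ) / 2) *
      Real.exp (-a * dist x y ^ 2 / (2 * t)) :=
    mul_nonneg (mul_nonneg (Real.rpow_nonneg (by norm_num) _) (Real.rpow_nonneg ht.le _))
      (Real.exp_nonneg _)
  set K : ℝ≥0∞ := ENNReal.ofReal (3 ^ ((d : ℝ) / 2) * t ^ (-(d : ℝ) / 2) *
      Real.exp (-a * dist x y ^ 2 / (2 * t))) with hK
  have hKtop : K ≠ ⊤ := by rw [hK]; exact ENNReal.ofReal_ne_top
  -- first piece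
  have h1 : (∫⁻ s in Ioc (0 : ℝ) (t / 3), ∫⁻ z,
      ENNReal.ofReal (s ^ (-(d : ℝ) / 2) * Real.exp (-a * dist x z ^ 2 / (2 * s)) *
        (t - s) ^ (-(d : ℝ) / 2) * Real.exp (-a * dist z y ^ 2 / (t - s))) ∂ν) ≤ K * M := by
    calc (∫⁻ s in Ioc (0 : ℝ) (t / 3), ∫⁻ z,
        ENNReal.ofReal (s ^ (-(d : ℝ) / 2) * Real.exp (-a * dist x z ^ 2 / (2 * s)) *
          (t - s) ^ (-(d : ℝ) / 2) * Real.exp (-a * dist z y ^ 2 / (t - s))) ∂ν)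
        ≤ ∫⁻ s in Ioc (0 : ℝ) (t / 3), K * ∫⁻ z,
            ENNReal.ofReal (s ^ (-(d : ℝ) / 2) *
              Real.exp (-a * dist x z ^ 2 / (4 * s))) ∂ν := by
          refine setLIntegral_mono' measurableSet_Ioc ?_
          rintro s ⟨hs0, hs3⟩
          rw [← lintegral_const_mul' _ _ hKtop]
          refine lintegral_mono fun z => ?_
          rw [hK, ← ENNReal.ofReal_mul hKr0]
          exact ENNReal.ofReal_le_ofReal
            (gcb_case1 d ha ht hs0 hs3 dist_nonneg dist_nonneg dist_nonneg (dist_triangle x z y))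
      _ = K * ∫⁻ s in Ioc (0 : ℝ) (t / 3), ∫⁻ z,
            ENNReal.ofReal (s ^ (-(d : ℝ) / 2) *
              Real.exp (-a * dist x z ^ 2 / (4 * s))) ∂ν :=
          lintegral_const_mul' _ _ hKtop
      _ ≤ K * ∫⁻ s in Ioc (0 : ℝ) t, ∫⁻ z,
            ENNReal.ofReal (s ^ (-(d : ℝ) / 2) *
              Real.exp (-a * dist x z ^ 2 / (4 * s))) ∂ν :=
          mul_le_mul_right (lintegral_mono_set (Ioc_subset_Ioc_right (by linarith))) _
      _ ≤ K * M := by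
          rw [hM]
          exact mul_le_mul_right (le_iSup (fun u => ∫⁻ s in Ioc (0 : ℝ) t, ∫⁻ z,
            ENNReal.ofReal (s ^ (-(d : ℝ) / 2) *
              Real.exp (-a * dist u z ^ 2 / (4 * s))) ∂ν) x) _
  -- second piece
  have hne : -(d : ℝ) / 2 ≠ 0 := by
    have : (0:ℝ) < d := by exact_mod_cast Nat.pos_of_ne_zero (by omega)
    have : -(d : ℝ) / 2 < 0 := by linarith
    exact ne_of_lt this
  have hcov : (∫⁻ s in Ioc (t / 3) t, ∫⁻ z,
      ENNReal.ofReal ((t - s) ^ (-(d : ℝ) / 2) *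
        Real.exp (-a * dist y z ^ 2 / (4 * (t - s)))) ∂ν) =
      ∫⁻ σ in Ico 0 (t - t / 3), ∫⁻ z,
        ENNReal.ofReal (σ ^ (-(d : ℝ) / 2) *
          Real.exp (-a * dist y z ^ 2 / (4 * σ))) ∂ν :=
    gcb_cov t (t / 3) (fun σ => ∫⁻ z,
      ENNReal.ofReal (σ ^ (-(d : ℝ) / 2) * Real.exp (-a * dist y z ^ 2 / (4 * σ))) ∂ν)
  have h2 : (∫⁻ s in Ioc (t / 3) t, ∫⁻ z,
      ENNReal.ofReal (s ^ (-(d : ℝ) / 2) * Real.exp (-a * dist x z ^ 2 / (2 * s)) *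
        (t - s) ^ (-(d : ℝ) / 2) * Real.exp (-a * dist z y ^ 2 / (t - s))) ∂ν) ≤ K * M := by
    calc (∫⁻ s in Ioc (t / 3) t, ∫⁻ z,
        ENNReal.ofReal (s ^ (-(d : ℝ) / 2) * Real.exp (-a * dist x z ^ 2 / (2 * s)) *
          (t - s) ^ (-(d : ℝ) / 2) * Real.exp (-a * dist z y ^ 2 / (t - s))) ∂ν)
        ≤ ∫⁻ s in Ioc (t / 3) t, K * ∫⁻ z,
            ENNReal.ofReal ((t - s) ^ (-(d : ℝ) / 2) *
              Real.exp (-a * dist y z ^ 2 / (4 * (t - s)))) ∂ν := by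
          refine setLIntegral_mono' measurableSet_Ioc ?_
          rintro s ⟨hs3, hst⟩
          rcases eq_or_lt_of_le hst with heq | hlt
          · subst heq
            simp only [sub_self, Real.zero_rpow hne, mul_zero, zero_mul,
              ENNReal.ofReal_zero, lintegral_zero]
            exact bot_le
          · rw [← lintegral_const_mul' _ _ hKtop]
            refine lintegral_mono fun z => ?_
            rw [dist_comm y z, hK, ← ENNReal.ofReal_mul hKr0]
            exact ENNReal.ofReal_le_ofReal
              (gcb_case2 d ha ht hs3 hlt dist_nonneg dist_nonneg dist_nonneg
                (dist_triangle x z y))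
      _ = K * ∫⁻ s in Ioc (t / 3) t, ∫⁻ z,
            ENNReal.ofReal ((t - s) ^ (-(d : ℝ) / 2) *
              Real.exp (-a * dist y z ^ 2 / (4 * (t - s)))) ∂ν :=
          lintegral_const_mul' _ _ hKtop
      _ = K * ∫⁻ σ in Ico 0 (t - t / 3), ∫⁻ z,
            ENNReal.ofReal (σ ^ (-(d : ℝ) / 2) *
              Real.exp (-a * dist y z ^ 2 / (4 * σ))) ∂ν := by rw [hcov]
      _ = K * ∫⁻ σ in Ioc (0 : ℝ) (t - t / 3), ∫⁻ z,
            ENNReal.ofReal (σ ^ (-(d : ℝ) / 2) *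
              Real.exp (-a * dist y z ^ 2 / (4 * σ))) ∂ν := by
          rw [Measure.restrict_congr_set Ico_ae_eq_Ioc]
      _ ≤ K * ∫⁻ σ in Ioc (0 : ℝ) t, ∫⁻ z,
            ENNReal.ofReal (σ ^ (-(d : ℝ) / 2) *
              Real.exp (-a * dist y z ^ 2 / (4 * σ))) ∂ν :=
          mul_le_mul_right (lintegral_mono_set (Ioc_subset_Ioc_right (by linarith))) _
      _ ≤ K * M := by
          rw [hM]
          exact mul_le_mul_right (le_iSup (fun u => ∫⁻ s in Ioc (0 : ℝ) t, ∫⁻ z,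
            ENNReal.ofReal (s ^ (-(d : ℝ) / 2) *
              Real.exp (-a * dist u z ^ 2 / (4 * s))) ∂ν) y) _
  have hKK : ENNReal.ofReal (2 * 3 ^ ((d : ℝ) / 2) * t ^ (-(d : ℝ) / 2) *
      Real.exp (-a * dist x y ^ 2 / (2 * t))) = K + K := by
    rw [hK, ← ENNReal.ofReal_add hKr0 hKr0]
    congr 1
    ring
  calc (∫⁻ s in Ioc (0 : ℝ) t, ∫⁻ z,
      ENNReal.ofReal (s ^ (-(d : ℝ) / 2) * Real.exp (-a * dist x z ^ 2 / (2 * s)) *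
        (t - s) ^ (-(d : ℝ) / 2) * Real.exp (-a * dist z y ^ 2 / (t - s))) ∂ν)
      = (∫⁻ s in Ioc (0 : ℝ) (t / 3), ∫⁻ z,
          ENNReal.ofReal (s ^ (-(d : ℝ) / 2) * Real.exp (-a * dist x z ^ 2 / (2 * s)) *
            (t - s) ^ (-(d : ℝ) / 2) * Real.exp (-a * dist z y ^ 2 / (t - s))) ∂ν) +
        ∫⁻ s in Ioc (t / 3) t, ∫⁻ z,
          ENNReal.ofReal (s ^ (-(d : ℝ) / 2) * Real.exp (-a * dist x z ^ 2 / (2 * s)) *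
            (t - s) ^ (-(d : ℝ) / 2) * Real.exp (-a * dist z y ^ 2 / (t - s))) ∂ν := by
        rw [← lintegral_union measurableSet_Ioc (Set.Ioc_disjoint_Ioc_of_le le_rfl),
          Set.Ioc_union_Ioc_eq_Ioc (by linarith) (by linarith)]
    _ ≤ K * M + K * M := add_le_add h1 h2
    _ = (K + K) * M := (add_mul _ _ _).symm
    _ = ENNReal.ofReal (2 * 3 ^ ((d : ℝ) / 2) * t ^ (-(d : ℝ) / 2) *
        Real.exp (-a * dist x y ^ 2 / (2 * t))) * M := by rw [hKK]
end

section
/- (Green function two-sided estimate implies 3G) Let D be a set with functions g₁, g₂ : D → (0,∞) and G : D×D → (0,∞), and suppose there is c₁ > 0 and a map (x,y) ↦ A_{x,y} ∈ D such that c₁^{-1} · g₁(x)g₂(y)/(g₁(A_{x,y})g₂(A_{x,y})) · |x−y|^{-(d-2)} ≤ G(x,y) ≤ c₁ · g₁(x)g₂(y)/(g₁(A_{x,y})g₂(A_{x,y})) · |x−y|^{-(d-2)} for all x ≠ y. Suppose further there are constants c₂, c₃ > 0 such that: (i) if |x−y| ≤ |y−z| then g_i(y) ≤ c₂ g_i(A_{x,y})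 and g_i(A_{x,z}) ≤ c₃ g_i(A_{y,z}) for i = 1,2; and (ii) symmetrically if |x−y| ≥ |y−z| then g_i(y) ≤ c₂ g_i(A_{y,z}) and g_i(A_{x,z}) ≤ c₃ g_i(A_{x,y}). Then there is c > 0 such that for all distinct x, y, z ∈ D: G(x,y)G(y,z)/G(x,z) ≤ c · |x−z|^{d-2} / (|x−y|^{d-2} |y−z|^{d-2}). -/
set_option maxHeartbeats 1000000 in
theorem two_sided_green_estimate_implies_3G
    (d : ℕ) (hd : 3 ≤ d) (D : Set (EuclideanSpace ℝ (Fin d)))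
    (G : EuclideanSpace ℝ (Fin d) → EuclideanSpace ℝ (Fin d) → ℝ)
    (g₁ g₂ : EuclideanSpace ℝ (Fin d) → ℝ)
    (hG : ∀ x ∈ D, ∀ y ∈ D, 0 < G x y)
    (hg₁ : ∀ x ∈ D, 0 < g₁ x) (hg₂ : ∀ x ∈ D, 0 < g₂ x)
    (A : EuclideanSpace ℝ (Fin d) → EuclideanSpace ℝ (Fin d) → EuclideanSpace ℝ (Fin d))
    (hAmem : ∀ x ∈ D, ∀ y ∈ D, A x y ∈ D)
    (c₁ : ℝ) (hc₁ : 0 < c₁)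
    (hest : ∀ x ∈ D, ∀ y ∈ D, x ≠ y →
      c₁⁻¹ * (g₁ x * g₂ y / (g₁ (A x y) * g₂ (A x y))) * (dist x y ^ (d - 2))⁻¹ ≤ G x y ∧
      G x y ≤ c₁ * (g₁ x * g₂ y / (g₁ (A x y) * g₂ (A x y))) * (dist x y ^ (d - 2))⁻¹)
    (c₂ c₃ : ℝ) (hc₂ : 0 < c₂) (hc₃ : 0 < c₃)
    (hcomp₁ : ∀ x ∈ D, ∀ y ∈ D, ∀ z ∈ D, dist x y ≤ dist y z →
      (g₁ y ≤ c₂ * g₁ (A x y) ∧ g₂ y ≤ c₂ * g₂ (A x y)) ∧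
      (g₁ (A x z) ≤ c₃ * g₁ (A y z) ∧ g₂ (A x z) ≤ c₃ * g₂ (A y z)))
    (hcomp₂ : ∀ x ∈ D, ∀ y ∈ D, ∀ z ∈ D, dist y z ≤ dist x y →
      (g₁ y ≤ c₂ * g₁ (A y z) ∧ g₂ y ≤ c₂ * g₂ (A y z)) ∧
      (g₁ (A x z) ≤ c₃ * g₁ (A x y) ∧ g₂ (A x z) ≤ c₃ * g₂ (A x y))) :
    ∃ c : ℝ, 0 < c ∧ ∀ x ∈ D, ∀ y ∈ D, ∀ z ∈ D, x ≠ y → y ≠ z → x ≠ z →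
      G x y * G y z / G x z ≤
        c * (dist x z ^ (d - 2) / (dist x y ^ (d - 2) * dist y z ^ (d - 2))) := by
  refine ⟨c₁ ^ 3 * (c₂ ^ 2 * c₃ ^ 2), by positivity, ?_⟩
  intro x hx y hy z hz hxy hyz hxz
  -- abbreviations
  have hAxy := hAmem x hx y hy
  have hAyz := hAmem y hy z hz
  have hAxz := hAmem x hx z hz
  have hg1x := hg₁ x hx; have hg1y := hg₁ y hy; have hg1z := hg₁ z hz
  have hg2x := hg₂ x hx; have hg2y := hg₂ y hy; have hg2z := hg₂ z hz
  have hg1Axy := hg₁ _ hAxy; have hg2Axy := hg₂ _ hAxy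
  have hg1Ayz := hg₁ _ hAyz; have hg2Ayz := hg₂ _ hAyz
  have hg1Axz := hg₁ _ hAxz; have hg2Axz := hg₂ _ hAxz
  set R1 : ℝ := g₁ x * g₂ y / (g₁ (A x y) * g₂ (A x y)) with hR1def
  set R2 : ℝ := g₁ y * g₂ z / (g₁ (A y z) * g₂ (A y z)) with hR2def
  set R3 : ℝ := g₁ x * g₂ z / (g₁ (A x z) * g₂ (A x z)) with hR3def
  have hR1 : 0 < R1 := by rw [hR1def]; positivity
  have hR2 : 0 < R2 := by rw [hR2def]; positivity
  have hR3 : 0 < R3 := by rw [hR3def]; positivity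
  set p1 : ℝ := dist x y ^ (d - 2) with hp1def
  set p2 : ℝ := dist y z ^ (d - 2) with hp2def
  set p3 : ℝ := dist x z ^ (d - 2) with hp3def
  have hp1 : 0 < p1 := pow_pos (dist_pos.mpr hxy) _
  have hp2 : 0 < p2 := pow_pos (dist_pos.mpr hyz) _
  have hp3 : 0 < p3 := pow_pos (dist_pos.mpr hxz) _
  have hGxy := (hest x hx y hy hxy).2
  have hGyz := (hest y hy z hz hyz).2
  have hGxz := (hest x hx z hz hxz).1
  -- key comparison: R1 * R2 ≤ c₂² c₃² * R3
  have hQ : R1 * R2 ≤ c₂ ^ 2 * c₃ ^ 2 * R3 := by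
    have key : ∀ u1 u2 v1 v2 : ℝ, 0 < u1 → 0 < u2 → 0 < v1 → 0 < v2 →
        g₁ y ≤ c₂ * u1 → g₂ y ≤ c₂ * u2 → g₁ (A x z) ≤ c₃ * v1 → g₂ (A x z) ≤ c₃ * v2 →
        (u1 = g₁ (A x y) ∧ u2 = g₂ (A x y) ∧ v1 = g₁ (A y z) ∧ v2 = g₂ (A y z)) ∨
        (u1 = g₁ (A y z) ∧ u2 = g₂ (A y z) ∧ v1 = g₁ (A x y) ∧ v2 = g₂ (A x y)) →
        R1 * R2 ≤ c₂ ^ 2 * c₃ ^ 2 * R3 := by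
      intro u1 u2 v1 v2 hu1 hu2 hv1 hv2 h1 h2 h3 h4 hcase
      have prod : g₁ y * g₂ y * (g₁ (A x z) * g₂ (A x z)) ≤
          c₂ ^ 2 * c₃ ^ 2 * (u1 * u2 * (v1 * v2)) := by
        have := mul_le_mul (mul_le_mul h1 h2 hg2y.le (by positivity : (0:ℝ) ≤ c₂ * u1))
            (mul_le_mul h3 h4 hg2Axz.le (by positivity : (0:ℝ) ≤ c₃ * v1))
            (by positivity) (by positivity)
        nlinarith [this]
      rcases hcase with ⟨e1, e2, e3, e4⟩ | ⟨e1, e2, e3, e4⟩ <;> subst e1 <;> subst e2 <;>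
        subst e3 <;> subst e4 <;>
      · rw [hR1def, hR2def, hR3def, div_mul_div_comm, ← mul_div_assoc, div_le_div_iff₀ (by positivity) (by positivity)]
        have := mul_le_mul_of_nonneg_left prod (by positivity : (0:ℝ) ≤ g₁ x * g₂ z)
        nlinarith [this]
    rcases le_total (dist x y) (dist y z) with h | h
    · obtain ⟨⟨h1, h2⟩, h3, h4⟩ := hcomp₁ x hx y hy z hz h
      exact key _ _ _ _ hg1Axy hg2Axy hg1Ayz hg2Ayz h1 h2 h3 h4 (Or.inl ⟨rfl, rfl, rfl, rfl⟩)
    · obtain ⟨⟨h1, h2⟩, h3, h4⟩ := hcomp₂ x hx y hy z hz h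
      exact key _ _ _ _ hg1Ayz hg2Ayz hg1Axy hg2Axy h1 h2 h3 h4 (Or.inr ⟨rfl, rfl, rfl, rfl⟩)
  -- combine the estimates
  have step1 : G x y * G y z / G x z ≤
      (c₁ * R1 * p1⁻¹) * (c₁ * R2 * p2⁻¹) / (c₁⁻¹ * R3 * p3⁻¹) :=
    div_le_div₀ (by positivity)
      (mul_le_mul hGxy hGyz (hG y hy z hz).le (by positivity))
      (by positivity) hGxz
  refine step1.trans ?_
  have hLHSeq : (c₁ * R1 * p1⁻¹) * (c₁ * R2 * p2⁻¹) / (c₁⁻¹ * R3 * p3⁻¹) =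
      c₁ ^ 3 * (R1 * R2 / R3) * (p3 / (p1 * p2)) := by
    field_simp
  rw [hLHSeq]
  have hdiv : R1 * R2 / R3 ≤ c₂ ^ 2 * c₃ ^ 2 := (div_le_iff₀ hR3).mpr hQ
  calc c₁ ^ 3 * (R1 * R2 / R3) * (p3 / (p1 * p2))
      ≤ c₁ ^ 3 * (c₂ ^ 2 * c₃ ^ 2) * (p3 / (p1 * p2)) := by gcongr
end
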